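/- Let v ∈ ℂ^6 be a hexagon whose Fourier coefficients satisfy ξ_0 = ξ_3 = 0, and suppose A(M^n v) ≠ 0 for every natural number n. Then for every natural number n, G(M^n v) is a real scalar multiple of G(v); in particular all the points G(M^n v) lie on a single line through the origin. -/

import Mathlib

open Complex

noncomputable section

/-- `ω = exp(2πi/6)`, a primitive sixth root of unity. -/
def ω6 : ℂ := Complex.exp (2 * Real.pi * Complex.I / 6)

/-- Fourier coefficients of a hexagon: `ξ_j = (1/6) ∑_k v_k ω^{-jk}`. -/
def ξ6 (v : Fin 6 → ℂ) (j : Fin 6) : ℂ :=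
  (1 / 6) * ∑ k : Fin 6, v k * ω6 ^ (-((j : ℤ) * (k : ℤ)))

/-- The midpoint map on hexagons: `(Mv)_k = (v_k + v_{k+1})/2`, indices mod 6. -/
def M6 (v : Fin 6 → ℂ) : Fin 6 → ℂ := fun k => (v k + v (k + 1)) / 2

/-- Signed area of a hexagon. -/
def A6 (v : Fin 6 → ℂ) : ℝ := (1 / 2) * ∑ k : Fin 6, ((starRingEnd ℂ) (v k) * v (k + 1)).im

/-- The quantity `Z(v) = ∑ (v_k + v_{k+1})·Im(conj(v_k)·v_{k+1})`. -/
def Z6 (v : Fin 6 → ℂ) : ℂ :=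
  ∑ k : Fin 6, (v k + v (k + 1)) * (((starRingEnd ℂ) (v k) * v (k + 1)).im : ℂ)

/-- The centroid `G(v) = Z(v)/(6·A(v))`. -/
def G6 (v : Fin 6 → ℂ) : ℂ := Z6 v / (6 * (A6 v : ℂ))

/-- Expressing `Im` via conjugation. -/
lemma him6 (z : ℂ) : ((z.im : ℝ) : ℂ) = (z - (starRingEnd ℂ) z) / (2*I) := by
  rw [Complex.sub_conj]
  push_cast
  field_simp

/-- The vanishing Fourier conditions as linear constraints. -/
lemma xi_constraints (v : Fin 6 → ℂ) (h0 : ξ6 v 0 = 0) (h3 : ξ6 v 3 = 0) :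
    v 0 + v 2 + v 4 = 0 ∧ v 1 + v 3 + v 5 = 0 := by
  have hne : ω6 ≠ 0 := Complex.exp_ne_zero _
  have h3p : ω6 ^ (3:ℕ) = -1 := by
    rw [ω6, ← Complex.exp_nat_mul]
    norm_num
    rw [show (3:ℂ) * (2 * Real.pi * I / 6) = Real.pi * I by ring, Complex.exp_pi_mul_I]
  have h9p : ω6 ^ (9:ℕ) = -1 := by
    rw [show (9:ℕ) = 3+3+3 by norm_num, pow_add, pow_add, h3p]; ring
  have h15p : ω6 ^ (15:ℕ) = -1 := by
    rw [show (15:ℕ) = 9+3+3 by norm_num, pow_add, pow_add, h9p, h3p]; ring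
  simp only [ξ6, Fin.sum_univ_six] at h0 h3
  norm_num [Fin.isValue, zpow_natCast] at h0 h3
  rw [h3p, h9p, h15p] at h3
  rw [show ω6^(6:ℕ) = 1 by rw [show (6:ℕ)=3+3 by norm_num, pow_add, h3p]; ring,
    show ω6^(12:ℕ) = 1 by rw [show (12:ℕ)=9+3 by norm_num, pow_add, h9p, h3p]; ring] at h3
  norm_num at h3
  exact ⟨by linear_combination (h0 + h3)/2, by linear_combination (h0 - h3)/2⟩

/-- The constraints are preserved by the midpoint map. -/
lemma constraints_step (v : Fin 6 → ℂ) (ha : v 0 + v 2 + v 4 = 0) (hb : v 1 + v 3 + v 5 = 0) :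
    (M6 v) 0 + (M6 v) 2 + (M6 v) 4 = 0 ∧ (M6 v) 1 + (M6 v) 3 + (M6 v) 5 = 0 := by
  simp only [M6]
  simp only [show (0+1:Fin 6)=1 by decide, show (1+1:Fin 6)=2 by decide,
    show (2+1:Fin 6)=3 by decide, show (3+1:Fin 6)=4 by decide,
    show (4+1:Fin 6)=5 by decide, show (5+1:Fin 6)=0 by decide]
  exact ⟨by linear_combination (ha + hb)/2, by linear_combination (ha + hb)/2⟩

/-- On constrained hexagons, `Z` scales by `3/8` under the midpoint map. -/
lemma Z_step (v : Fin 6 → ℂ) (ha : v 0 + v 2 + v 4 = 0) (hb : v 1 + v 3 + v 5 = 0) :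
    Z6 (M6 v) = (3/8) * Z6 v := by
  have h4 : v 4 = -(v 0) - v 2 := by linear_combination ha
  have h5 : v 5 = -(v 1) - v 3 := by linear_combination hb
  simp only [Z6, M6, Fin.sum_univ_six]
  simp only [show (0+1:Fin 6)=1 by decide, show (1+1:Fin 6)=2 by decide,
    show (2+1:Fin 6)=3 by decide, show (3+1:Fin 6)=4 by decide,
    show (4+1:Fin 6)=5 by decide, show (5+1:Fin 6)=0 by decide]
  rw [h4, h5]
  simp only [him6, map_mul, map_add, map_sub, map_neg, map_div₀, Complex.conj_conj,
    Complex.conj_I, map_ofNat]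
  ring

theorem centroids_real_multiples (v : Fin 6 → ℂ)
    (h0 : ξ6 v 0 = 0) (h3 : ξ6 v 3 = 0)
    (hA : ∀ n : ℕ, A6 (M6^[n] v) ≠ 0) :
    ∀ n : ℕ, ∃ t : ℝ, G6 (M6^[n] v) = t • G6 v := by
  have key : ∀ n : ℕ,
      ((M6^[n] v) 0 + (M6^[n] v) 2 + (M6^[n] v) 4 = 0 ∧
       (M6^[n] v) 1 + (M6^[n] v) 3 + (M6^[n] v) 5 = 0) ∧
      Z6 (M6^[n] v) = (3/8)^n * Z6 v := by
    intro n
    induction n with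
    | zero =>
      simp only [Function.iterate_zero, id_eq, pow_zero, one_mul]
      exact ⟨xi_constraints v h0 h3, trivial⟩
    | succ n ih =>
      obtain ⟨⟨ha, hb⟩, hZ⟩ := ih
      rw [Function.iterate_succ_apply']
      refine ⟨constraints_step _ ha hb, ?_⟩
      rw [Z_step _ ha hb, hZ, pow_succ]
      ring
  intro n
  have hZ := (key n).2
  have hAn : ((A6 (M6^[n] v) : ℝ) : ℂ) ≠ 0 := by
    exact_mod_cast Complex.ofReal_ne_zero.mpr (hA n)
  have hA0 : ((A6 v : ℝ) : ℂ) ≠ 0 := by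
    have := hA 0
    rw [Function.iterate_zero, id_eq] at this
    exact_mod_cast Complex.ofReal_ne_zero.mpr this
  refine ⟨(3/8)^n * A6 v / A6 (M6^[n] v), ?_⟩
  rw [Complex.real_smul]
  simp only [G6, hZ]
  push_cast
  field_simp
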